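/- The polar of Ω_θ, defined as Ω_θ°(Z) = sup{⟨Z,X⟩ : Ω_θ(X) ≤ 1}, equals sup{uᵀZv : θ(u,v) ≤ 1}. -/

import Mathlib

open Matrix Filter
open scoped ENNReal BigOperators

/-- The matrix factorization regularizer: infimum over all factorizations `X = U * Vᵀ`
(with a variable number `r` of columns) of the sum of `θ` applied to column pairs. -/
noncomputable def Omega {D N : ℕ} (θ : (Fin D → ℝ) → (Fin N → ℝ) → ℝ≥0∞)
    (X : Matrix (Fin D) (Fin N) ℝ) : ℝ≥0∞ :=
  ⨅ (r : ℕ) (U : Matrix (Fin D) (Fin r) ℝ) (V : Matrix (Fin N) (Fin r) ℝ)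
    (_ : U * Vᵀ = X), ∑ i : Fin r, θ (fun d => U d i) (fun n => V n i)

/-- `θ` is a rank-1 regularizer: positively homogeneous of degree 2, `θ(0,0) = 0`
(nonnegativity is automatic in `ℝ≥0∞`), and `θ(uₙ,vₙ) → ∞` whenever `‖uₙvₙᵀ‖_F → ∞`. -/
def IsRankOneReg {D N : ℕ} (θ : (Fin D → ℝ) → (Fin N → ℝ) → ℝ≥0∞) : Prop :=
  (∀ (α : ℝ), 0 ≤ α → ∀ u v, θ (α • u) (α • v) = ENNReal.ofReal (α ^ 2) * θ u v) ∧
  (θ 0 0 = 0) ∧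
  (∀ (u : ℕ → Fin D → ℝ) (v : ℕ → Fin N → ℝ),
    Tendsto (fun k => Real.sqrt (∑ d, ∑ m, (u k d * v k m) ^ 2)) atTop atTop →
    Tendsto (fun k => θ (u k) (v k)) atTop (nhds ⊤))

/-- The Frobenius (trace) inner product on matrices. -/
noncomputable def frobInner {D N : ℕ} (A B : Matrix (Fin D) (Fin N) ℝ) : ℝ :=
  ∑ d, ∑ n, A d n * B d n


open Topology

lemma frobInner_mul_transpose {D N r : ℕ} (Z : Matrix (Fin D) (Fin N) ℝ)
    (U : Matrix (Fin D) (Fin r) ℝ) (V : Matrix (Fin N) (Fin r) ℝ) :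
    frobInner Z (U * Vᵀ) = ∑ i, (fun d => U d i) ⬝ᵥ Z *ᵥ (fun n => V n i) := by
  simp only [frobInner, mul_apply, transpose_apply, dotProduct, mulVec, Finset.mul_sum]
  refine (Finset.sum_congr rfl fun d _ => Finset.sum_comm).trans (Finset.sum_comm.trans ?_)
  exact Finset.sum_congr rfl fun i _ => Finset.sum_congr rfl fun d _ =>
    Finset.sum_congr rfl fun n _ => by ring

lemma replicateCol_mul_transpose_replicateCol {m n α : Type*} [Mul α] [AddCommMonoid α]
    (u : m → α) (v : n → α) :
    replicateCol (Fin 1) u * (replicateCol (Fin 1) v)ᵀ = vecMulVec u v := by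
  rw [transpose_replicateCol]
  exact (vecMulVec_eq (Fin 1) u v).symm

lemma frobInner_vecMulVec {D N : ℕ} (Z : Matrix (Fin D) (Fin N) ℝ) (u : Fin D → ℝ)
    (v : Fin N → ℝ) : frobInner Z (vecMulVec u v) = u ⬝ᵥ Z *ᵥ v := by
  rw [← replicateCol_mul_transpose_replicateCol, frobInner_mul_transpose, Fin.sum_univ_one]
  rfl

lemma Omega_vecMulVec_le {D N : ℕ} (θ : (Fin D → ℝ) → (Fin N → ℝ) → ℝ≥0∞)
    (u : Fin D → ℝ) (v : Fin N → ℝ) : Omega θ (vecMulVec u v) ≤ θ u v := by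
  refine iInf_le_of_le 1 <| iInf_le_of_le _ <| iInf_le_of_le _ <|
    iInf_le_of_le (replicateCol_mul_transpose_replicateCol u v) ?_
  rw [Fin.sum_univ_one]
  rfl

lemma ENNReal.le_mul_of_forall_lt_le_mul {x a c : ℝ≥0∞} (ha : a ≠ ⊤) (hc : c ≠ ⊤)
    (h : ∀ b, a < b → b ≠ ⊤ → x ≤ b * c) : x ≤ a * c := by
  have : (𝓝[>] a).NeBot := nhdsGT_neBot_of_exists_gt ⟨⊤, ha.lt_top⟩
  refine ge_of_tendsto (ENNReal.Tendsto.mul_const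
    (tendsto_nhdsWithin_of_tendsto_nhds (s := Set.Ioi a) tendsto_id) (Or.inr hc)) ?_
  filter_upwards [Ioo_mem_nhdsGT ha.lt_top] with b hb
  exact h b hb.1 hb.2.ne

noncomputable def rankOnePolar {D N : ℕ} (θ : (Fin D → ℝ) → (Fin N → ℝ) → ℝ≥0∞)
    (Z : Matrix (Fin D) (Fin N) ℝ) : ℝ≥0∞ :=
  ⨆ (u : Fin D → ℝ) (v : Fin N → ℝ) (_ : θ u v ≤ 1), ENNReal.ofReal (u ⬝ᵥ Z *ᵥ v)

def IsHomogeneousOfDegreeTwo {D N : ℕ} (θ : (Fin D → ℝ) → (Fin N → ℝ) → ℝ≥0∞) : Prop :=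
  ∀ α : ℝ, 0 ≤ α → ∀ u v, θ (α • u) (α • v) = ENNReal.ofReal (α ^ 2) * θ u v

section Polar

variable {D N : ℕ} {θ : (Fin D → ℝ) → (Fin N → ℝ) → ℝ≥0∞} (Z : Matrix (Fin D) (Fin N) ℝ)

lemma ofReal_dotProduct_mulVec_le_mul_rankOnePolar_of_le (hθ : IsHomogeneousOfDegreeTwo θ)
    {u : Fin D → ℝ} {v : Fin N → ℝ} {b : ℝ≥0∞} (hb₀ : b ≠ 0) (hb : b ≠ ⊤) (huv : θ u v ≤ b) :
    ENNReal.ofReal (u ⬝ᵥ Z *ᵥ v) ≤ b * rankOnePolar θ Z := by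
  set t := b.toReal
  have ht : 0 < t := ENNReal.toReal_pos hb₀ hb
  have hscaled : θ ((√t)⁻¹ • u) ((√t)⁻¹ • v) ≤ 1 := by
    rw [hθ _ (by positivity), inv_pow, Real.sq_sqrt ht.le]
    calc ENNReal.ofReal t⁻¹ * θ u v ≤ ENNReal.ofReal t⁻¹ * ENNReal.ofReal t := by
          rw [ENNReal.ofReal_toReal hb]; gcongr
      _ = 1 := by rw [← ENNReal.ofReal_mul (by positivity), inv_mul_cancel₀ ht.ne',
          ENNReal.ofReal_one]
  have hle : ENNReal.ofReal (t⁻¹ * (u ⬝ᵥ Z *ᵥ v)) ≤ rankOnePolar θ Z := by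
    refine le_iSup₂_of_le _ _ (le_iSup_of_le hscaled (le_of_eq ?_))
    rw [smul_dotProduct, mulVec_smul, dotProduct_smul, smul_eq_mul, smul_eq_mul,
      ← mul_assoc, ← sq, inv_pow, Real.sq_sqrt ht.le]
  calc ENNReal.ofReal (u ⬝ᵥ Z *ᵥ v)
      _ = ENNReal.ofReal t * ENNReal.ofReal (t⁻¹ * (u ⬝ᵥ Z *ᵥ v)) := by
        rw [← ENNReal.ofReal_mul ht.le, mul_inv_cancel_left₀ ht.ne']
      _ ≤ b * rankOnePolar θ Z := by rw [ENNReal.ofReal_toReal hb]; gcongr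

lemma ofReal_dotProduct_mulVec_le_mul_rankOnePolar (hθ : IsHomogeneousOfDegreeTwo θ)
    {u : Fin D → ℝ} {v : Fin N → ℝ} (hZ : rankOnePolar θ Z ≠ ⊤) (huv : θ u v ≠ ⊤) :
    ENNReal.ofReal (u ⬝ᵥ Z *ᵥ v) ≤ θ u v * rankOnePolar θ Z :=
  ENNReal.le_mul_of_forall_lt_le_mul huv hZ fun _ hb hb_top =>
    ofReal_dotProduct_mulVec_le_mul_rankOnePolar_of_le Z hθ (pos_of_gt hb).ne' hb_top hb.le

lemma ofReal_frobInner_le_Omega_mul_rankOnePolar (hθ : IsHomogeneousOfDegreeTwo θ)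
    {X : Matrix (Fin D) (Fin N) ℝ} (hZ : rankOnePolar θ Z ≠ ⊤) (hX : Omega θ X ≠ ⊤) :
    ENNReal.ofReal (frobInner Z X) ≤ Omega θ X * rankOnePolar θ Z := by
  refine ENNReal.le_mul_of_forall_lt_le_mul hX hZ fun b hb _ => ?_
  obtain ⟨r, U, V, rfl, hsum⟩ : ∃ (r : ℕ) (U : Matrix (Fin D) (Fin r) ℝ)
      (V : Matrix (Fin N) (Fin r) ℝ), U * Vᵀ = X ∧
      ∑ i : Fin r, θ (fun d => U d i) (fun n => V n i) < b := by
    simpa only [Omega, iInf_lt_iff, exists_prop] using hb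
  have hθ_ne_top : ∀ i, θ (fun d => U d i) (fun n => V n i) ≠ ⊤ := fun i =>
    ENNReal.sum_ne_top.1 (ne_top_of_lt hsum) i (Finset.mem_univ i)
  calc ENNReal.ofReal (frobInner Z (U * Vᵀ))
      ≤ ∑ i, ENNReal.ofReal ((fun d => U d i) ⬝ᵥ Z *ᵥ (fun n => V n i)) := by
        rw [frobInner_mul_transpose]
        exact Finset.le_sum_of_subadditive _ ENNReal.ofReal_zero.le
          (fun _ _ => ENNReal.ofReal_add_le) _ _
    _ ≤ ∑ i, θ (fun d => U d i) (fun n => V n i) * rankOnePolar θ Z :=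
        Finset.sum_le_sum fun i _ =>
          ofReal_dotProduct_mulVec_le_mul_rankOnePolar Z hθ hZ (hθ_ne_top i)
    _ ≤ b * rankOnePolar θ Z := by rw [← Finset.sum_mul]; gcongr

end Polar

/-- The polar of `Ω_θ` equals `sup{uᵀZv : θ(u,v) ≤ 1}`. -/
theorem omega_polar {D N : ℕ} (θ : (Fin D → ℝ) → (Fin N → ℝ) → ℝ≥0∞)
    (hθ : IsRankOneReg θ) (Z : Matrix (Fin D) (Fin N) ℝ) :
    (⨆ (X : Matrix (Fin D) (Fin N) ℝ) (_ : Omega θ X ≤ 1),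
        ENNReal.ofReal (frobInner Z X)) =
    (⨆ (u : Fin D → ℝ) (v : Fin N → ℝ) (_ : θ u v ≤ 1),
        ENNReal.ofReal (u ⬝ᵥ Z *ᵥ v)) := by
  change _ = rankOnePolar θ Z
  refine le_antisymm (iSup₂_le fun X hX => ?_) (iSup₂_le fun u v => iSup_le fun huv => ?_)
  · by_cases hZ : rankOnePolar θ Z = ⊤
    · exact hZ ▸ le_top
    calc ENNReal.ofReal (frobInner Z X) ≤ Omega θ X * rankOnePolar θ Z :=
          ofReal_frobInner_le_Omega_mul_rankOnePolar Z hθ.1 hZ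
            (ne_top_of_le_ne_top ENNReal.one_ne_top hX)
      _ ≤ rankOnePolar θ Z := mul_le_of_le_one_left' hX
  · refine le_iSup₂_of_le (vecMulVec u v) ((Omega_vecMulVec_le θ u v).trans huv) ?_
    rw [frobInner_vecMulVec]
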